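/- Let I(α,β) = Σ_{i≠j} [(α_i − β_j)² + (1/2)(β_i − β_j)²], where the sum runs over ordered pairs (i,j) with i,j ∈ {0,1,2} and i ≠ j. Then for every fixed α = (α₀,α₁,α₂) ∈ ℝ³, the infimum of I(α,β) over β ∈ ℝ³ equals (3/5)·[(α₀−α₁)² + (α₁−α₂)² + (α₂−α₀)²], and this infimum is attained at exactly one point β, given by β_i = (2σ − α_i)/5 for i = 0,1,2, where σ = α₀ + α₁ + α₂. -/

import Mathlib

/-!
Write `m` for the harmonic midpoint values `mᵢ = (αᵢ + 2αⱼ + 2αₖ)/5` (the "1/5–2/5 rule").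
The energy `I(α, ·)` is a quadratic polynomial whose linear part in `β - m` vanishes, because `m`
is its critical point; its quadratic part is `I(0, ·)`, so `I(α, m + δ) = I(α, m) + I(0, δ)`.
Since `I(0, δ) ≥ 2 ‖δ‖²`, the value `I(α, m)` is the strict minimum.
-/

/-- `I(α,β) = Σ_{i≠j} [(αᵢ − βⱼ)² + (1/2)(βᵢ − βⱼ)²]`, summing over ordered
pairs `(i,j)`, `i ≠ j`, `i, j ∈ {0,1,2}`. -/
noncomputable def cellEnergy (α β : Fin 3 → ℝ) : ℝ :=
  ∑ i : Fin 3, ∑ j : Fin 3,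
    if i ≠ j then (α i - β j) ^ 2 + (1 / 2) * (β i - β j) ^ 2 else 0

noncomputable def harmonicMidpoints (α : Fin 3 → ℝ) : Fin 3 → ℝ :=
  fun i => (2 * (α 0 + α 1 + α 2) - α i) / 5

lemma cellEnergy_eq_sum_sq (α β : Fin 3 → ℝ) :
    cellEnergy α β =
      (α 0 - β 1) ^ 2 + (α 0 - β 2) ^ 2 + (α 1 - β 0) ^ 2 + (α 1 - β 2) ^ 2
        + (α 2 - β 0) ^ 2 + (α 2 - β 1) ^ 2
        + ((β 0 - β 1) ^ 2 + (β 1 - β 2) ^ 2 + (β 2 - β 0) ^ 2) := by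
  simp only [cellEnergy, Fin.sum_univ_three]
  norm_num [Fin.ext_iff]
  ring

lemma cellEnergy_harmonicMidpoints (α : Fin 3 → ℝ) :
    cellEnergy α (harmonicMidpoints α) =
      3 / 5 * ((α 0 - α 1) ^ 2 + (α 1 - α 2) ^ 2 + (α 2 - α 0) ^ 2) := by
  rw [cellEnergy_eq_sum_sq]
  simp only [harmonicMidpoints]
  ring

lemma cellEnergy_eq_cellEnergy_harmonicMidpoints_add (α β : Fin 3 → ℝ) :
    cellEnergy α β =
      cellEnergy α (harmonicMidpoints α) + cellEnergy 0 (β - harmonicMidpoints α) := by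
  simp only [cellEnergy_eq_sum_sq, harmonicMidpoints, Pi.zero_apply, Pi.sub_apply]
  ring

lemma two_mul_sum_sq_le_cellEnergy_zero (δ : Fin 3 → ℝ) :
    2 * ∑ i, δ i ^ 2 ≤ cellEnergy 0 δ := by
  rw [cellEnergy_eq_sum_sq, Fin.sum_univ_three]
  simp only [Pi.zero_apply]
  nlinarith [sq_nonneg (δ 0 - δ 1), sq_nonneg (δ 1 - δ 2), sq_nonneg (δ 2 - δ 0)]

lemma cellEnergy_zero_nonneg (δ : Fin 3 → ℝ) : 0 ≤ cellEnergy 0 δ :=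
  (by positivity : (0 : ℝ) ≤ 2 * ∑ i, δ i ^ 2).trans (two_mul_sum_sq_le_cellEnergy_zero δ)

lemma eq_zero_of_cellEnergy_zero_eq_zero {δ : Fin 3 → ℝ} (h : cellEnergy 0 δ = 0) : δ = 0 := by
  have hsum : ∑ i, δ i ^ 2 = 0 :=
    le_antisymm (by linarith [two_mul_sum_sq_le_cellEnergy_zero δ]) (by positivity)
  funext i
  simpa using (Finset.sum_eq_zero_iff_of_nonneg (fun j _ => sq_nonneg (δ j))).mp hsum i
    (Finset.mem_univ i)

/-- For every fixed `α ∈ ℝ³`, the infimum of `I(α, ·)` over `β ∈ ℝ³` equals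
`(3/5)[(α₀−α₁)² + (α₁−α₂)² + (α₂−α₀)²]`, and it is attained at exactly one
point, namely `βᵢ = (2σ − αᵢ)/5` where `σ = α₀ + α₁ + α₂`. -/
theorem cellEnergy_isLeast_and_unique_minimizer (α : Fin 3 → ℝ) :
    IsLeast (Set.range (cellEnergy α))
      ((3 / 5) * ((α 0 - α 1) ^ 2 + (α 1 - α 2) ^ 2 + (α 2 - α 0) ^ 2)) ∧
    cellEnergy α (fun i => (2 * (α 0 + α 1 + α 2) - α i) / 5)
      = (3 / 5) * ((α 0 - α 1) ^ 2 + (α 1 - α 2) ^ 2 + (α 2 - α 0) ^ 2) ∧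
    ∀ β : Fin 3 → ℝ,
      cellEnergy α β
        = (3 / 5) * ((α 0 - α 1) ^ 2 + (α 1 - α 2) ^ 2 + (α 2 - α 0) ^ 2) →
      β = fun i => (2 * (α 0 + α 1 + α 2) - α i) / 5 := by
  have hmin := cellEnergy_harmonicMidpoints α
  refine ⟨⟨⟨_, hmin⟩, ?_⟩, hmin, fun β hβ => ?_⟩
  · rintro _ ⟨β, rfl⟩
    rw [cellEnergy_eq_cellEnergy_harmonicMidpoints_add α β, hmin]
    linarith [cellEnergy_zero_nonneg (β - harmonicMidpoints α)]
  · rw [cellEnergy_eq_cellEnergy_harmonicMidpoints_add α β, hmin, add_eq_left] at hβ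
    exact sub_eq_zero.mp (eq_zero_of_cellEnergy_zero_eq_zero hβ)
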